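/- arXiv:2207.06218 — 2 statements merged into one kernel-verified Lean document; each statement's English description precedes it below -/
import Mathlib

section
/- Let φ: G → B be a fibration between directed multigraphs surjective on nodes (preserving weights if graphs are weighted). For any row vector v indexed by nodes of B and any α with |α| ρ(G) < 1 and |α| ρ(B) < 1, we have v^φ (I − αG)^{-1} = (v (I − αB)^{-1})^φ, where v^φ is defined by (v^φ)_i = v_{φ(i)}. -/
/-- A directed multigraph: a set of nodes, a set of arcs, and source/target maps. -/
structure Multigraph (N A : Type*) where
  src : A → N
  tgt : A → N

/-- The adjacency matrix of a multigraph (over `ℝ`): entry `(x, y)` counts the arcs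
from `x` to `y` with multiplicity. -/
noncomputable def adjMat {N A : Type*} [Fintype A] [DecidableEq N]
    (G : Multigraph N A) : Matrix N N ℝ :=
  fun x y => ((Finset.univ.filter fun a => G.src a = x ∧ G.tgt a = y).card : ℝ)

/-- A graph fibration `φ : G → B`: a morphism of multigraphs (commuting with source
and target maps) such that every arc of `B` lifts uniquely at each node of `G` in
the fiber over its target. -/
structure Fibration {N A N' A' : Type*} (G : Multigraph N A) (B : Multigraph N' A') where
  nodeMap : N → N'
  arcMap : A → A'
  src_comm : ∀ a : A, B.src (arcMap a) = nodeMap (G.src a)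
  tgt_comm : ∀ a : A, B.tgt (arcMap a) = nodeMap (G.tgt a)
  lift : ∀ (a : A') (x : N), nodeMap x = B.tgt a →
    ∃! (la : A), arcMap la = a ∧ G.tgt la = x

/-- The spectral radius of a real square matrix: the supremum of the absolute values
of its (complex) eigenvalues. -/
noncomputable def specRad {n : Type*} [Fintype n] [DecidableEq n]
    (M : Matrix n n ℝ) : ℝ :=
  sSup ((fun z : ℂ => ‖z‖) '' spectrum ℂ (M.map (algebraMap ℝ ℂ)))

/-! Pulling row vectors back along `φ` intertwines the adjacency matrices, `u^φ G = (u B)^φ`: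
the arcs of `G` into a node `y` are, via `φ`, in bijection with the arcs of `B` into `φ y`.
Hence pulling back also intertwines `I - αG` with `I - αB`. Both are invertible, since otherwise
`1/α` would be an eigenvalue of modulus `≥ 1/|α| > ρ`, and an intertwining of invertible
matrices intertwines their inverses as well. -/

open Matrix

theorem norm_le_specRad {n : Type*} [Fintype n] [DecidableEq n] (M : Matrix n n ℝ) {z : ℂ}
    (hz : z ∈ spectrum ℂ (M.map (algebraMap ℝ ℂ))) : ‖z‖ ≤ specRad M :=
  le_csSup ((Matrix.finite_spectrum _).image _).bddAbove ⟨z, hz, rfl⟩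

theorem spectrum.inv_mem_of_not_isUnit_one_sub_smul {K A : Type*} [Field K] [Ring A] [Algebra K A]
    {a : A} {c : K} (hc : c ≠ 0) (h : ¬IsUnit (1 - c • a)) : c⁻¹ ∈ spectrum K a := by
  have h1 : (1 : K) ∈ spectrum K (c • a) := by
    rwa [spectrum.mem_iff, map_one]
  rw [← mul_inv_cancel₀ hc] at h1
  exact spectrum.smul_mem_smul_iff (r := Units.mk0 c hc) |>.mp h1

theorem Matrix.isUnit_map_iff_of_field {n K L : Type*} [Fintype n] [DecidableEq n] [Field K]
    [Field L] (f : K →+* L) (M : Matrix n n K) : IsUnit (M.map f) ↔ IsUnit M := by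
  rw [isUnit_iff_isUnit_det, isUnit_iff_isUnit_det, ← RingHom.mapMatrix_apply, ← RingHom.map_det,
    isUnit_map_iff]

theorem isUnit_one_sub_smul_of_abs_mul_specRad_lt_one {n : Type*} [Fintype n] [DecidableEq n]
    (M : Matrix n n ℝ) {α : ℝ} (h : |α| * specRad M < 1) : IsUnit (1 - α • M) := by
  by_contra hM
  have hα : α ≠ 0 := by
    rintro rfl
    simp at hM
  have hMℂ : ¬IsUnit (1 - (α : ℂ) • M.map (algebraMap ℝ ℂ)) := by
    have hmap : (1 - α • M).map (algebraMap ℝ ℂ) = 1 - (α : ℂ) • M.map (algebraMap ℝ ℂ) := by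
      ext i j
      simp [Matrix.one_apply, apply_ite]
    rwa [← Matrix.isUnit_map_iff_of_field (algebraMap ℝ ℂ), hmap] at hM
  have hle := norm_le_specRad M
    (spectrum.inv_mem_of_not_isUnit_one_sub_smul (Complex.ofReal_ne_zero.mpr hα) hMℂ)
  rw [norm_inv, Complex.norm_real, Real.norm_eq_abs] at hle
  have := (inv_le_iff_one_le_mul₀' (abs_pos.mpr hα)).mp hle
  linarith

theorem vecMul_adjMat_apply {N A : Type*} [Fintype N] [Fintype A] [DecidableEq N]
    (G : Multigraph N A) (u : N → ℝ) (y : N) :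
    (u ᵥ* adjMat G) y = ∑ a with G.tgt a = y, u (G.src a) := by
  simp only [vecMul, dotProduct, adjMat, Finset.natCast_card_filter, Finset.mul_sum, mul_ite,
    mul_one, mul_zero, Finset.sum_filter]
  rw [Finset.sum_comm]
  refine Finset.sum_congr rfl fun a _ => ?_
  by_cases ha : G.tgt a = y <;> simp [ha]

theorem Fibration.vecMul_adjMat_comp {N A N' A' : Type*} [Fintype N] [Fintype N'] [Fintype A]
    [Fintype A'] [DecidableEq N] [DecidableEq N'] {G : Multigraph N A} {B : Multigraph N' A'}
    (φ : Fibration G B) (u : N' → ℝ) :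
    (u ∘ φ.nodeMap) ᵥ* adjMat G = (u ᵥ* adjMat B) ∘ φ.nodeMap := by
  funext y
  rw [vecMul_adjMat_apply, Function.comp_apply, vecMul_adjMat_apply]
  refine Finset.sum_nbij φ.arcMap ?_ ?_ ?_ ?_
  · intro a ha
    simp only [Finset.mem_filter_univ] at ha ⊢
    rw [φ.tgt_comm, ha]
  · intro a₁ ha₁ a₂ ha₂ h
    simp only [Finset.mem_coe, Finset.mem_filter_univ] at ha₁ ha₂
    exact (φ.lift _ y (by rw [φ.tgt_comm, ha₁])).unique ⟨rfl, ha₁⟩ ⟨h.symm, ha₂⟩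
  · intro b hb
    simp only [Finset.mem_coe, Finset.mem_filter_univ] at hb
    obtain ⟨a, ⟨rfl, ha⟩, -⟩ := φ.lift b y hb.symm
    exact ⟨a, by simpa using ha, rfl⟩
  · intro a _
    simp [φ.src_comm]

section Intertwining

variable {m n R : Type*} [Fintype m] [Fintype n] [DecidableEq m] [DecidableEq n] [CommRing R]
  {f : n → m} {M : Matrix n n R} {M' : Matrix m m R}

theorem vecMul_comp_one_sub_smul (h : ∀ u, (u ∘ f) ᵥ* M = (u ᵥ* M') ∘ f) (α : R) (u : m → R) :
    (u ∘ f) ᵥ* (1 - α • M) = (u ᵥ* (1 - α • M')) ∘ f := by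
  rw [vecMul_sub, vecMul_sub, vecMul_one, vecMul_one, vecMul_smul, vecMul_smul, h]
  rfl

theorem vecMul_comp_inv (h : ∀ u, (u ∘ f) ᵥ* M = (u ᵥ* M') ∘ f) (hM : IsUnit M.det)
    (hM' : IsUnit M'.det) (v : m → R) : (v ∘ f) ᵥ* M⁻¹ = (v ᵥ* M'⁻¹) ∘ f := by
  set w := v ᵥ* M'⁻¹
  have hv : v = w ᵥ* M' := by
    rw [vecMul_vecMul, nonsing_inv_mul _ hM', vecMul_one]
  rw [hv, ← h, vecMul_vecMul, mul_nonsing_inv _ hM, vecMul_one]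

end Intertwining

theorem fibration_resolvent_comm_general {N A N' A' : Type*}
    [Fintype N] [Fintype N'] [Fintype A] [Fintype A'] [DecidableEq N] [DecidableEq N']
    (G : Multigraph N A) (B : Multigraph N' A') (φ : Fibration G B)
    (v : N' → ℝ) (α : ℝ)
    (hG : |α| * specRad (adjMat G) < 1) (hB : |α| * specRad (adjMat B) < 1) :
    Matrix.vecMul (v ∘ φ.nodeMap) (1 - α • adjMat G)⁻¹ =
      (Matrix.vecMul v (1 - α • adjMat B)⁻¹) ∘ φ.nodeMap :=
  vecMul_comp_inv (vecMul_comp_one_sub_smul φ.vecMul_adjMat_comp α)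
    ((isUnit_iff_isUnit_det _).mp (isUnit_one_sub_smul_of_abs_mul_specRad_lt_one _ hG))
    ((isUnit_iff_isUnit_det _).mp (isUnit_one_sub_smul_of_abs_mul_specRad_lt_one _ hB)) v

/-- If `φ : G → B` is a node-surjective fibration and `|α| ρ(G) < 1`,
`|α| ρ(B) < 1`, then lifting commutes with the resolvent:
`v^φ (I - αG)⁻¹ = (v (I - αB)⁻¹)^φ`. -/
theorem fibration_resolvent_comm {N A N' A' : Type*}
    [Fintype N] [Fintype N'] [Fintype A] [Fintype A'] [DecidableEq N] [DecidableEq N']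
    (G : Multigraph N A) (B : Multigraph N' A') (φ : Fibration G B)
    (hsurj : Function.Surjective φ.nodeMap) (v : N' → ℝ) (α : ℝ)
    (hG : |α| * specRad (adjMat G) < 1) (hB : |α| * specRad (adjMat B) < 1) :
    Matrix.vecMul (v ∘ φ.nodeMap) (1 - α • adjMat G)⁻¹ =
      (Matrix.vecMul v (1 - α • adjMat B)⁻¹) ∘ φ.nodeMap :=
  fibration_resolvent_comm_general G B φ v α hG hB
end

section
/- A node-surjective fibration φ: G → B induces a divisibility of characteristic polynomials of adjacency matrices: every eigenvalue of B is an eigenvalue of G; more precisely, every left eigenvector e of B with eigenvalue λ lifts to a left eigenvector e^φ of G with the same eigenvalue λ. -/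
/-- Unfolding a vecMul entry as a sum over arcs with given target. -/
lemma vecMul_adjMat_eq_sum {N A : Type*} [Fintype N] [Fintype A] [DecidableEq N]
    (G : Multigraph N A) (u : N → ℝ) (j : N) :
    Matrix.vecMul u (adjMat G) j
      = ∑ a ∈ Finset.univ.filter (fun a => G.tgt a = j), u (G.src a) := by
  classical
  rw [Matrix.vecMul, dotProduct]
  simp only [adjMat]
  have : ∀ i : N, u i * ((Finset.univ.filter fun a => G.src a = i ∧ G.tgt a = j).card : ℝ)
      = ∑ a ∈ Finset.univ.filter (fun a => G.src a = i ∧ G.tgt a = j), u (G.src a) := by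
    intro i
    rw [Finset.sum_congr rfl (fun a ha => by
      simp only [Finset.mem_filter] at ha
      rw [ha.2.1])]
    simp [mul_comm]
  rw [Finset.sum_congr rfl (fun i _ => this i)]
  rw [← Finset.sum_biUnion]
  · apply Finset.sum_congr
    · ext a
      simp only [Finset.mem_biUnion, Finset.mem_filter, Finset.mem_univ, true_and]
      constructor
      · rintro ⟨i, hi, h⟩; exact h
      · intro h; exact ⟨G.src a, rfl, h⟩
    · intros; rfl
  · intro i _ i' _ hne
    simp only [Finset.disjoint_left, Finset.mem_filter]
    rintro a ⟨-, rfl, -⟩ ⟨-, h, -⟩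
    exact hne h

/-- A node-surjective fibration lifts left eigenvectors: if `e` is a (nonzero) left
eigenvector of the adjacency matrix of `B` with eigenvalue `μ`, then the lifted
vector `e^φ` (defined by `(e^φ)_i = e_{φ(i)}`) is a nonzero left eigenvector of the
adjacency matrix of `G` with the same eigenvalue `μ`. In particular every
eigenvalue of `B` is an eigenvalue of `G`. -/
theorem fibration_lifts_eigenvectors {N A N' A' : Type*}
    [Fintype N] [Fintype N'] [Fintype A] [Fintype A'] [DecidableEq N] [DecidableEq N']
    (G : Multigraph N A) (B : Multigraph N' A') (φ : Fibration G B)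
    (hsurj : Function.Surjective φ.nodeMap) (e : N' → ℝ) (μ : ℝ)
    (hne : e ≠ 0) (heig : Matrix.vecMul e (adjMat B) = μ • e) :
    Matrix.vecMul (e ∘ φ.nodeMap) (adjMat G) = μ • (e ∘ φ.nodeMap) ∧
      (e ∘ φ.nodeMap) ≠ 0 := by
  classical
  constructor
  · funext j
    have key : Matrix.vecMul (e ∘ φ.nodeMap) (adjMat G) j
        = Matrix.vecMul e (adjMat B) (φ.nodeMap j) := by
      rw [vecMul_adjMat_eq_sum, vecMul_adjMat_eq_sum]
      apply Finset.sum_bij (fun a _ => φ.arcMap a)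
      · intro a ha
        simp only [Finset.mem_filter, Finset.mem_univ, true_and] at ha ⊢
        rw [φ.tgt_comm, ha]
      · intro a1 h1 a2 h2 heq
        simp only [Finset.mem_filter, Finset.mem_univ, true_and] at h1 h2
        obtain ⟨la, -, huniq⟩ := φ.lift (φ.arcMap a1) j (by rw [φ.tgt_comm, h1])
        have e1 := huniq a1 ⟨rfl, h1⟩
        have e2 := huniq a2 ⟨heq.symm, h2⟩
        rw [e1, e2]
      · intro b hb
        simp only [Finset.mem_filter, Finset.mem_univ, true_and] at hb
        obtain ⟨la, ⟨hmap, htgt⟩, -⟩ := φ.lift b j hb.symm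
        exact ⟨la, by simp [htgt], hmap⟩
      · intro a ha
        simp [φ.src_comm]
    rw [key, heig]
    simp
  · intro h
    obtain ⟨y, hy⟩ := Function.ne_iff.mp hne
    obtain ⟨x, rfl⟩ := hsurj y
    exact hy (congrFun h x)
end
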